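/- arXiv:1407.0601 — 4 statements merged into one kernel-verified Lean document; each statement's English description precedes it below -/
import Mathlib

section
/- Let c : ℝ → ℝ^d be a 2π-periodic immersion of class C¹ and let h : ℝ → ℝ be a 2π-periodic continuously differentiable function. Then ‖h‖²_{L^∞} ≤ (2/ℓ_c)·‖h‖²_{L²(ds)} + (ℓ_c/2)·‖D_c h‖²_{L²(ds)}. -/
open scoped Real
open MeasureTheory

/-- A 2π-periodic immersion of class C¹: `c` is C¹, 2π-periodic and has
nonvanishing derivative. -/
def ClosedImmersionC1 {d : ℕ} (c : ℝ → EuclideanSpace ℝ (Fin d)) : Prop :=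
  ContDiff ℝ 1 c ∧ Function.Periodic c (2 * π) ∧ ∀ θ : ℝ, deriv c θ ≠ 0

/-!
For a periodic `g = h²`, integrating `g'` from `a` to `b` and from `b` to `a + 2π` shows that
`2 (g b - g a)` is at most `∫ |g'|` over a period. Averaging over `a` against the weight `w = |c'|`
of total mass `ℓ` gives `g b ≤ (1/ℓ) ∫ g w + ½ ∫ |g'|`, and the AM-GM inequality
`|g'| = 2 |h| |h'| ≤ (2/ℓ) h² w + (ℓ/2) (h'/w)² w` bounds the last term.
-/

theorem periodic_deriv {g : ℝ → ℝ} {T : ℝ} (hg : Function.Periodic g T) :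
    Function.Periodic (deriv g) T := fun x => by
  rw [← deriv_comp_add_const, funext hg]

namespace Function.Periodic

variable {g : ℝ → ℝ} {T : ℝ}

theorem two_mul_sub_le_integral_abs_deriv (hg : Periodic g T) (hT : 0 < T) (hg₁ : ContDiff ℝ 1 g)
    (a b : ℝ) : 2 * (g b - g a) ≤ ∫ t in (0:ℝ)..T, |deriv g t| := by
  obtain ⟨b', ⟨hab', hb'T⟩, hgb⟩ := hg.exists_mem_Ico hT b a
  have hint : ∀ x y, IntervalIntegrable (deriv g) volume x y := fun x y =>
    hg₁.continuous_deriv_one.intervalIntegrable x y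
  have hftc : ∀ x y, ∫ t in x..y, deriv g t = g y - g x := fun x y =>
    intervalIntegral.integral_deriv_eq_sub (fun t _ => (hg₁.differentiable one_ne_zero) t) (hint x y)
  calc 2 * (g b - g a)
      = (∫ t in a..b', deriv g t) - ∫ t in b'..a + T, deriv g t := by
        rw [hftc, hftc, hg a, hgb]; ring
    _ ≤ (∫ t in a..b', |deriv g t|) + ∫ t in b'..a + T, |deriv g t| := by
        have h₁ := intervalIntegral.abs_integral_le_integral_abs (f := deriv g) (μ := volume) hab'
        have h₂ := intervalIntegral.abs_integral_le_integral_abs (f := deriv g) (μ := volume) hb'T.le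
        linarith [le_abs_self (∫ t in a..b', deriv g t), neg_abs_le (∫ t in b'..a + T, deriv g t)]
    _ = ∫ t in a..a + T, |deriv g t| :=
        intervalIntegral.integral_add_adjacent_intervals (hint _ _).abs (hint _ _).abs
    _ = ∫ t in (0:ℝ)..T, |deriv g t| := by
        simpa using ((periodic_deriv hg).comp abs).intervalIntegral_add_eq a 0

theorem mul_integral_le_integral_mul_add_integral_abs_deriv (hg : Periodic g T) (hT : 0 < T)
    (hg₁ : ContDiff ℝ 1 g) {w : ℝ → ℝ} (hw : Continuous w) (hw₀ : ∀ t, 0 ≤ w t) (θ : ℝ) :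
    g θ * ∫ t in (0:ℝ)..T, w t ≤
      (∫ t in (0:ℝ)..T, g t * w t) +
        (∫ t in (0:ℝ)..T, w t) / 2 * ∫ t in (0:ℝ)..T, |deriv g t| := by
  set V := ∫ t in (0:ℝ)..T, |deriv g t|
  have hpoint : ∀ t, g θ * w t ≤ g t * w t + V / 2 * w t := fun t => by
    nlinarith [hg.two_mul_sub_le_integral_abs_deriv hT hg₁ t θ, hw₀ t]
  have hgw : Continuous fun t => g t * w t := hg₁.continuous.mul hw
  have hVw : Continuous fun t => V / 2 * w t := continuous_const.mul hw
  calc g θ * ∫ t in (0:ℝ)..T, w t = ∫ t in (0:ℝ)..T, g θ * w t :=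
        (intervalIntegral.integral_const_mul _ _).symm
    _ ≤ ∫ t in (0:ℝ)..T, (g t * w t + V / 2 * w t) :=
        intervalIntegral.integral_mono_on hT.le ((continuous_const.mul hw).intervalIntegrable _ _)
          ((hgw.add hVw).intervalIntegrable _ _) fun t _ => hpoint t
    _ = _ := by
        rw [intervalIntegral.integral_add (hgw.intervalIntegrable _ _) (hVw.intervalIntegrable _ _),
          intervalIntegral.integral_const_mul]
        ring

end Function.Periodic

theorem abs_two_mul_mul_le {x y w ℓ : ℝ} (hw : 0 < w) (hℓ : 0 < ℓ) :
    |2 * x * y| ≤ 2 / ℓ * (x ^ 2 * w) + ℓ / 2 * ((y / w) ^ 2 * w) := by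
  rw [div_pow, abs_mul, abs_mul, abs_two, ← sq_abs x, ← sq_abs y, ← sub_nonneg]
  have hsq : 2 / ℓ * (|x| ^ 2 * w) + ℓ / 2 * (|y| ^ 2 / w ^ 2 * w) - 2 * |x| * |y| =
      (2 * w * |x| - ℓ * |y|) ^ 2 / (2 * ℓ * w) := by
    field_simp
    ring
  rw [hsq]
  positivity

theorem integral_abs_deriv_sq_le {h w : ℝ → ℝ} (hh : ContDiff ℝ 1 h) (hw : Continuous w)
    (hw₀ : ∀ t, 0 < w t) {ℓ a b : ℝ} (hℓ : 0 < ℓ) (hab : a ≤ b) :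
    ∫ t in a..b, |deriv (fun s => h s ^ 2) t| ≤
      2 / ℓ * (∫ t in a..b, h t ^ 2 * w t) +
        ℓ / 2 * ∫ t in a..b, (deriv h t / w t) ^ 2 * w t := by
  have hd : Differentiable ℝ h := hh.differentiable one_ne_zero
  have hderiv : ∀ t, deriv (fun s => h s ^ 2) t = 2 * h t * deriv h t := fun t => by
    simp [hd t]
  have hh' := hh.continuous_deriv_one
  have hA : Continuous fun t => 2 / ℓ * (h t ^ 2 * w t) := by fun_prop
  have hB : Continuous fun t => ℓ / 2 * ((deriv h t / w t) ^ 2 * w t) :=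
    continuous_const.mul (((hh'.div hw fun t => (hw₀ t).ne').pow 2).mul hw)
  simp only [hderiv]
  rw [← intervalIntegral.integral_const_mul, ← intervalIntegral.integral_const_mul,
    ← intervalIntegral.integral_add (hA.intervalIntegrable _ _) (hB.intervalIntegrable _ _)]
  exact intervalIntegral.integral_mono_on hab
    (((continuous_const.mul hh.continuous).mul hh').abs.intervalIntegrable _ _)
    ((hA.add hB).intervalIntegrable _ _) fun t _ => abs_two_mul_mul_le (hw₀ t) hℓ

theorem Function.Periodic.sq_le_weighted {h w : ℝ → ℝ} {T : ℝ} (hper : Periodic h T) (hT : 0 < T)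
    (hh : ContDiff ℝ 1 h) (hw : Continuous w) (hw₀ : ∀ t, 0 < w t) (θ : ℝ) :
    h θ ^ 2 ≤
      2 / (∫ t in (0:ℝ)..T, w t) * (∫ t in (0:ℝ)..T, h t ^ 2 * w t) +
        (∫ t in (0:ℝ)..T, w t) / 2 * ∫ t in (0:ℝ)..T, (deriv h t / w t) ^ 2 * w t := by
  set ℓ := ∫ t in (0:ℝ)..T, w t
  set A := ∫ t in (0:ℝ)..T, h t ^ 2 * w t
  set B := ∫ t in (0:ℝ)..T, (deriv h t / w t) ^ 2 * w t
  have hℓ : 0 < ℓ :=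
    intervalIntegral.intervalIntegral_pos_of_pos_on (hw.intervalIntegrable _ _) (fun t _ => hw₀ t) hT
  have hB : 0 ≤ B := intervalIntegral.integral_nonneg hT.le fun t _ =>
    mul_nonneg (sq_nonneg _) (hw₀ t).le
  set V := ∫ t in (0:ℝ)..T, |deriv (fun s => h s ^ 2) t|
  have hmean : h θ ^ 2 * ℓ ≤ A + ℓ / 2 * V :=
    (show Periodic (fun s => h s ^ 2) T from fun s => by simp only [hper s])
      |>.mul_integral_le_integral_mul_add_integral_abs_deriv hT (hh.pow 2) hw
        (fun t => (hw₀ t).le) θ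
  have hvar : ℓ / 2 * V ≤ A + ℓ ^ 2 / 4 * B := calc
    ℓ / 2 * V ≤ ℓ / 2 * (2 / ℓ * A + ℓ / 2 * B) :=
      mul_le_mul_of_nonneg_left (integral_abs_deriv_sq_le hh hw hw₀ hℓ hT.le) (by positivity)
    _ = A + ℓ ^ 2 / 4 * B := by field_simp; ring
  rw [← mul_le_mul_iff_of_pos_right hℓ, show (2 / ℓ * A + ℓ / 2 * B) * ℓ = 2 * A + ℓ ^ 2 / 2 * B by
    field_simp]
  nlinarith [mul_nonneg (sq_nonneg ℓ) hB]

theorem sq_iSup_abs_le {ι : Sort*} [Nonempty ι] {f : ι → ℝ} {M : ℝ} (hf : ∀ i, f i ^ 2 ≤ M) :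
    (⨆ i, |f i|) ^ 2 ≤ M := by
  have hM : 0 ≤ M := (sq_nonneg _).trans (hf (Classical.arbitrary ι))
  calc (⨆ i, |f i|) ^ 2 ≤ √M ^ 2 :=
        pow_le_pow_left₀ (Real.iSup_nonneg fun i => abs_nonneg _)
          (Real.iSup_le (fun i => Real.abs_le_sqrt (hf i)) (Real.sqrt_nonneg M)) 2
    _ = M := Real.sq_sqrt hM

theorem stmt0_general (d : ℕ) (c : ℝ → EuclideanSpace ℝ (Fin d))
    (hc : ClosedImmersionC1 c)
    (h : ℝ → ℝ) (hh : ContDiff ℝ 1 h) (hhper : Function.Periodic h (2 * π)) :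
    (⨆ θ : ℝ, |h θ|) ^ 2 ≤
      2 / (∫ θ in (0:ℝ)..(2 * π), ‖deriv c θ‖) *
        (∫ θ in (0:ℝ)..(2 * π), (h θ) ^ 2 * ‖deriv c θ‖) +
      (∫ θ in (0:ℝ)..(2 * π), ‖deriv c θ‖) / 2 *
        (∫ θ in (0:ℝ)..(2 * π), (deriv h θ / ‖deriv c θ‖) ^ 2 * ‖deriv c θ‖) := by
  obtain ⟨hc₁, -, hc'⟩ := hc
  exact sq_iSup_abs_le fun θ => hhper.sq_le_weighted (by positivity) hh
    hc₁.continuous_deriv_one.norm (fun t => norm_pos_iff.mpr (hc' t)) θ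

/-- the Poincaré-type inequality
`‖h‖²_{L∞} ≤ (2/ℓ_c)·‖h‖²_{L²(ds)} + (ℓ_c/2)·‖D_c h‖²_{L²(ds)}`. -/
theorem stmt0 (d : ℕ) (hd : 1 ≤ d) (c : ℝ → EuclideanSpace ℝ (Fin d))
    (hc : ClosedImmersionC1 c)
    (h : ℝ → ℝ) (hh : ContDiff ℝ 1 h) (hhper : Function.Periodic h (2 * π)) :
    (⨆ θ : ℝ, |h θ|) ^ 2 ≤
      2 / (∫ θ in (0:ℝ)..(2 * π), ‖deriv c θ‖) *
        (∫ θ in (0:ℝ)..(2 * π), (h θ) ^ 2 * ‖deriv c θ‖) +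
      (∫ θ in (0:ℝ)..(2 * π), ‖deriv c θ‖) / 2 *
        (∫ θ in (0:ℝ)..(2 * π), (deriv h θ / ‖deriv c θ‖) ^ 2 * ‖deriv c θ‖) :=
  stmt0_general d c hc h hh hhper
end

section
/- Let n ≥ 2, let c : ℝ → ℝ^d be a 2π-periodic immersion of class Cⁿ, let h : ℝ → ℝ be a 2π-periodic function of class Cⁿ, and let 0 ≤ k ≤ n. Then ‖D_c^k h‖²_{L²(ds)} ≤ ‖h‖²_{L²(ds)} + ‖D_c^n h‖²_{L²(ds)}, where D_c^k denotes the k-fold iterate of the arc-length derivative. -/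
/-!
Integrating by parts around the closed curve gives
`‖D^{j+1} h‖² = -⟨D^j h, D^{j+2} h⟩` in `L²(ds)`, so by AM-GM the sequence
`a j = ‖D^j h‖²_{L²(ds)}` satisfies `2 a (j+1) ≤ a j + a (j+2)` for `j + 2 ≤ n`.
A convex sequence on `0, …, n` is bounded by the larger of its endpoint values,
and both of these are nonnegative.
-/

open scoped Real
open MeasureTheory

/-- The arc-length derivative `D_c h = h' / |c'|` of a scalar function. -/
noncomputable def arcDerivS {d : ℕ} (c : ℝ → EuclideanSpace ℝ (Fin d))
    (h : ℝ → ℝ) : ℝ → ℝ :=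
  fun θ => deriv h θ / ‖deriv c θ‖

open Function

theorem Function.Periodic.deriv {𝕜 F : Type*} [NontriviallyNormedField 𝕜] [NormedAddCommGroup F]
    [NormedSpace 𝕜 F] {f : 𝕜 → F} {T : 𝕜} (hf : Periodic f T) : Periodic (deriv f) T := by
  intro x
  rw [← deriv_comp_add_const, funext hf]

theorem Function.Periodic.integral_mul_deriv_eq_neg_integral_deriv_mul {u v : ℝ → ℝ} {T : ℝ}
    (hu : Periodic u T) (hv : Periodic v T) (hu1 : ContDiff ℝ 1 u) (hv1 : ContDiff ℝ 1 v) :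
    ∫ x in (0:ℝ)..T, u x * _root_.deriv v x = -∫ x in (0:ℝ)..T, _root_.deriv u x * v x := by
  rw [intervalIntegral.integral_mul_deriv_eq_deriv_mul
    (fun x _ => (hu1.differentiable one_ne_zero x).hasDerivAt)
    (fun x _ => (hv1.differentiable one_ne_zero x).hasDerivAt)
    ((hu1.continuous_deriv le_rfl).intervalIntegrable _ _)
    ((hv1.continuous_deriv le_rfl).intervalIntegrable _ _)]
  rw [show u T = u 0 by simpa using hu 0, show v T = v 0 by simpa using hv 0, sub_self, zero_sub]

theorem le_max_of_two_mul_le_add {α : Type*} [Field α] [LinearOrder α] [IsStrictOrderedRing α]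
    {a : ℕ → α} {n : ℕ} (hconv : ∀ j, j + 2 ≤ n → 2 * a (j + 1) ≤ a j + a (j + 2))
    {k : ℕ} (hk : k ≤ n) : a k ≤ max (a 0) (a n) := by
  set Δ : ℕ → α := fun j => a (j + 1) - a j with hΔ
  have hΔmono : MonotoneOn Δ (Set.Iio n) := by
    refine monotoneOn_of_le_succ Set.ordConnected_Iio fun j _ _ hj => ?_
    simp only [Order.succ_eq_add_one, Set.mem_Iio] at hj ⊢
    have := hconv j (by omega)
    simp only [hΔ]
    linarith
  rcases k with _ | k
  · exact le_max_left _ _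
  by_cases hΔk : Δ k ≤ 0
  · -- the increments before `k + 1` are all `≤ Δ k ≤ 0`
    have : AntitoneOn a (Set.Iic (k + 1)) := by
      refine antitoneOn_of_succ_le Set.ordConnected_Iic fun j _ _ hj => ?_
      simp only [Order.succ_eq_add_one, Set.mem_Iic] at hj ⊢
      have := hΔmono (by simp; omega) (by simp; omega) (by omega : j ≤ k)
      simp only [hΔ] at this hΔk
      linarith
    exact le_max_of_le_left (this (by simp) (by simp) (Nat.zero_le _))
  · -- the increments from `k` on are all `≥ Δ k > 0`
    have : MonotoneOn a (Set.Icc (k + 1) n) := by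
      refine monotoneOn_of_le_succ Set.ordConnected_Icc fun j _ hj hj' => ?_
      simp only [Order.succ_eq_add_one, Set.mem_Icc] at hj hj' ⊢
      have := hΔmono (by simp; omega) (by simp; omega) (by omega : k ≤ j)
      simp only [hΔ] at this hΔk
      linarith
    exact le_max_of_le_right (this (by simp [hk]) (by simp; omega) hk)

section ArcDeriv

variable {d : ℕ} {c : ℝ → EuclideanSpace ℝ (Fin d)} {g : ℝ → ℝ}

theorem contDiff_norm_deriv {m : WithTop ℕ∞} (hc : ContDiff ℝ (m + 1) c)
    (hcimm : ∀ θ, deriv c θ ≠ 0) : ContDiff ℝ m fun θ => ‖deriv c θ‖ :=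
  hc.deriv'.norm ℝ hcimm

theorem ContDiff.arcDerivS {m : WithTop ℕ∞} (hc : ContDiff ℝ (m + 1) c)
    (hcimm : ∀ θ, deriv c θ ≠ 0) (hg : ContDiff ℝ (m + 1) g) :
    ContDiff ℝ m (_root_.arcDerivS c g) :=
  hg.deriv'.div (contDiff_norm_deriv hc hcimm) fun θ => norm_ne_zero_iff.mpr (hcimm θ)

theorem ContDiff.iterate_arcDerivS {m : WithTop ℕ∞} (hcimm : ∀ θ, deriv c θ ≠ 0) (j : ℕ)
    (hc : ContDiff ℝ (m + j) c) (hg : ContDiff ℝ (m + j) g) :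
    ContDiff ℝ m ((_root_.arcDerivS c)^[j] g) := by
  induction j generalizing g with
  | zero => simpa using hg
  | succ j ih =>
    rw [Nat.cast_succ, ← add_assoc] at hc hg
    rw [iterate_succ_apply]
    exact ih (hc.of_le le_self_add) (hc.arcDerivS hcimm hg)

theorem Function.Periodic.arcDerivS {T : ℝ} (hg : Periodic g T) (hc : Periodic c T) :
    Periodic (_root_.arcDerivS c g) T :=
  hg.deriv.div (hc.deriv.comp norm)

theorem Function.Periodic.iterate_arcDerivS {T : ℝ} (hg : Periodic g T) (hc : Periodic c T)
    (j : ℕ) : Periodic ((_root_.arcDerivS c)^[j] g) T := by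
  induction j with
  | zero => exact hg
  | succ j ih => rw [iterate_succ_apply']; exact ih.arcDerivS hc

theorem two_mul_integral_sq_arcDerivS_le {T : ℝ} (hT : 0 ≤ T) (hc : ContDiff ℝ 2 c)
    (hcper : Periodic c T) (hcimm : ∀ θ, deriv c θ ≠ 0)
    (hg : ContDiff ℝ 2 g) (hgper : Periodic g T) :
    2 * ∫ θ in (0:ℝ)..T, (arcDerivS c g θ) ^ 2 * ‖deriv c θ‖ ≤
      (∫ θ in (0:ℝ)..T, (g θ) ^ 2 * ‖deriv c θ‖) +
      ∫ θ in (0:ℝ)..T, (arcDerivS c (arcDerivS c g) θ) ^ 2 * ‖deriv c θ‖ := by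
  set Dg := arcDerivS c g
  set D2g := arcDerivS c Dg
  have hderiv (f : ℝ → ℝ) (θ : ℝ) : deriv f θ = arcDerivS c f θ * ‖deriv c θ‖ :=
    (div_mul_cancel₀ _ (norm_ne_zero_iff.mpr (hcimm θ))).symm
  have hc1 : ContDiff ℝ (1 + 1) c := hc
  have hDg : ContDiff ℝ 1 Dg := hc1.arcDerivS hcimm hg
  have hc0 : ContDiff ℝ (0 + 1) c := by simpa using hc.of_le one_le_two
  have hD2g : Continuous D2g := (hc0.arcDerivS hcimm (by simpa using hDg)).continuous
  have hρ : Continuous fun θ => ‖deriv c θ‖ := (contDiff_norm_deriv hc1 hcimm).continuous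
  have hgc : Continuous g := hg.continuous
  have hparts : ∫ θ in (0:ℝ)..T, Dg θ ^ 2 * ‖deriv c θ‖ =
      -∫ θ in (0:ℝ)..T, g θ * D2g θ * ‖deriv c θ‖ := by
    calc ∫ θ in (0:ℝ)..T, Dg θ ^ 2 * ‖deriv c θ‖
        = -∫ θ in (0:ℝ)..T, g θ * deriv Dg θ := by
          rw [hgper.integral_mul_deriv_eq_neg_integral_deriv_mul (hgper.arcDerivS hcper)
            (hg.of_le one_le_two) hDg, neg_neg]
          exact intervalIntegral.integral_congr fun θ _ => by simp only [hderiv g θ]; ring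
      _ = -∫ θ in (0:ℝ)..T, g θ * D2g θ * ‖deriv c θ‖ := by
          congr 1
          exact intervalIntegral.integral_congr fun θ _ => by simp only [hderiv Dg θ]; ring
  calc 2 * ∫ θ in (0:ℝ)..T, Dg θ ^ 2 * ‖deriv c θ‖
      = ∫ θ in (0:ℝ)..T, -2 * (g θ * D2g θ * ‖deriv c θ‖) := by
        rw [hparts, intervalIntegral.integral_const_mul]; ring
    _ ≤ ∫ θ in (0:ℝ)..T, (g θ ^ 2 * ‖deriv c θ‖ + D2g θ ^ 2 * ‖deriv c θ‖) := by
        refine intervalIntegral.integral_mono_on hT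
          ((by fun_prop : Continuous _).intervalIntegrable _ _)
          ((by fun_prop : Continuous _).intervalIntegrable _ _) fun θ _ => ?_
        nlinarith [sq_nonneg (g θ + D2g θ), norm_nonneg (deriv c θ)]
    _ = _ := intervalIntegral.integral_add
        ((by fun_prop : Continuous _).intervalIntegrable _ _)
        ((by fun_prop : Continuous _).intervalIntegrable _ _)

end ArcDeriv

theorem stmt2_general (d : ℕ) (n : ℕ)
    (c : ℝ → EuclideanSpace ℝ (Fin d))
    (hc : ContDiff ℝ n c) (hcper : Function.Periodic c (2 * π))
    (hcimm : ∀ θ : ℝ, deriv c θ ≠ 0)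
    (h : ℝ → ℝ) (hh : ContDiff ℝ n h) (hhper : Function.Periodic h (2 * π))
    (k : ℕ) (hk : k ≤ n) :
    ∫ θ in (0:ℝ)..(2 * π), ((arcDerivS c)^[k] h θ) ^ 2 * ‖deriv c θ‖ ≤
      (∫ θ in (0:ℝ)..(2 * π), (h θ) ^ 2 * ‖deriv c θ‖) +
      ∫ θ in (0:ℝ)..(2 * π), ((arcDerivS c)^[n] h θ) ^ 2 * ‖deriv c θ‖ := by
  set a : ℕ → ℝ := fun j => ∫ θ in (0:ℝ)..(2 * π), ((arcDerivS c)^[j] h θ) ^ 2 * ‖deriv c θ‖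
  have ha (j : ℕ) : 0 ≤ a j :=
    intervalIntegral.integral_nonneg (by positivity) fun θ _ => by positivity
  have hconv (j : ℕ) (hj : j + 2 ≤ n) : 2 * a (j + 1) ≤ a j + a (j + 2) := by
    have hjn : ((2 + j : ℕ) : WithTop ℕ∞) ≤ n := by exact_mod_cast (by omega : 2 + j ≤ n)
    have hjn' : ((2 : ℕ) : WithTop ℕ∞) ≤ n := by exact_mod_cast (by omega : 2 ≤ n)
    have hDj : ContDiff ℝ 2 ((arcDerivS c)^[j] h) :=
      ContDiff.iterate_arcDerivS hcimm j (hc.of_le (by exact_mod_cast hjn))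
        (hh.of_le (by exact_mod_cast hjn))
    simpa only [a, iterate_succ_apply'] using two_mul_integral_sq_arcDerivS_le (by positivity)
      (hc.of_le (by exact_mod_cast hjn')) hcper hcimm hDj (hhper.iterate_arcDerivS hcper j)
  calc a k ≤ max (a 0) (a n) := le_max_of_two_mul_le_add hconv hk
    _ ≤ a 0 + a n := max_le_add_of_nonneg (ha 0) (ha n)

/-- for `0 ≤ k ≤ n`,
`‖D_c^k h‖²_{L²(ds)} ≤ ‖h‖²_{L²(ds)} + ‖D_c^n h‖²_{L²(ds)}`. -/
theorem stmt2 (d : ℕ) (hd : 1 ≤ d) (n : ℕ) (hn : 2 ≤ n)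
    (c : ℝ → EuclideanSpace ℝ (Fin d))
    (hc : ContDiff ℝ n c) (hcper : Function.Periodic c (2 * π))
    (hcimm : ∀ θ : ℝ, deriv c θ ≠ 0)
    (h : ℝ → ℝ) (hh : ContDiff ℝ n h) (hhper : Function.Periodic h (2 * π))
    (k : ℕ) (hk : k ≤ n) :
    ∫ θ in (0:ℝ)..(2 * π), ((arcDerivS c)^[k] h θ) ^ 2 * ‖deriv c θ‖ ≤
      (∫ θ in (0:ℝ)..(2 * π), (h θ) ^ 2 * ‖deriv c θ‖) +
      ∫ θ in (0:ℝ)..(2 * π), ((arcDerivS c)^[n] h θ) ^ 2 * ‖deriv c θ‖ :=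
  stmt2_general d n c hc hcper hcimm h hh hhper k hk
end

section
/- Let E and F be real Banach spaces, U ⊆ E open, and g : U × E × E → ℝ continuous such that for every x ∈ U the map g(x,·,·) is a symmetric positive-semidefinite bilinear form; write |v|_x = √(g(x,v,v)). Define the length of a C¹ path γ : [0,1] → U as L(γ) = ∫₀¹ |γ'(t)|_{γ(t)} dt and the distance d(x,y) ∈ [0,∞] as the infimum of L(γ) over all C¹ paths γ in U from x to y. Let f : U → F be continuously Fréchet differentiable and assume that for every y ∈ U and r > 0 there exists C > 0 such that ‖Df(x)v‖_F ≤ C·(1 + ‖f(x)‖_F)·|v|_x holds for all x ∈ U with d(y,x) < r and all v ∈ E. Then for every y ∈ U and r > 0 there exists K > 0 such that ‖f(x₁) − f(x₂)‖_F ≤ K·d(x₁,x₂) for all x₁, x₂ ∈ U with d(y,x₁) < r and d(y,x₂) < r; in particular f is bounded on every such metric ball. -/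
/-!
Along a C¹ path `γ` the hypothesis bounds the derivative of `f ∘ γ` by
`C (1 + ‖f ∘ γ‖) |γ'|_γ`, so a Grönwall comparison gives
`‖f (γ 1) - f (γ 0)‖ ≤ (1 + ‖f (γ 0)‖) (exp (C L(γ)) - 1)`. Applied to paths issuing from the
centre `y`, this bounds `f` on the ball `d(y, ·) < r`. For `x₁, x₂` in that ball, a path between
them of length `L < 2r` stays in the ball of radius `3r` (the triangle inequality for `d` comes
from concatenating paths), and `exp (C L) - 1 ≤ C L exp (2 C r)` makes the estimate linear in `L`;
longer paths are handled by the bound on `f`. The infimum over paths is the Lipschitz estimate.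
-/

open scoped ENNReal
open MeasureTheory

/-- The length `∫₀¹ |γ'(t)|_{γ(t)} dt` of a C¹ path, measured by a
(possibly weak) Riemannian metric `g`. -/
noncomputable def gPathLength {E : Type*} [NormedAddCommGroup E] [NormedSpace ℝ E]
    (g : E → E → E → ℝ) (γ : ℝ → E) : ℝ :=
  ∫ t in (0:ℝ)..1, Real.sqrt (g (γ t) (deriv γ t) (deriv γ t))

/-- The induced distance in `[0,∞]`: the infimum of lengths of C¹ paths in `U`
joining `x` to `y`. -/
noncomputable def gDist {E : Type*} [NormedAddCommGroup E] [NormedSpace ℝ E]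
    (U : Set E) (g : E → E → E → ℝ) (x y : E) : ℝ≥0∞ :=
  ⨅ (γ : ℝ → E) (_ : ContDiff ℝ 1 γ ∧ (∀ t ∈ Set.Icc (0:ℝ) 1, γ t ∈ U) ∧
      γ 0 = x ∧ γ 1 = y),
    ENNReal.ofReal (gPathLength g γ)

open Set Filter Topology Real intervalIntegral

section PathLength

variable {E : Type*} [NormedAddCommGroup E] [NormedSpace ℝ E] {U : Set E} {g : E → E → E → ℝ}

def IsAdmissiblePath (U : Set E) (x y : E) (γ : ℝ → E) : Prop :=
  ContDiff ℝ 1 γ ∧ (∀ t ∈ Icc (0:ℝ) 1, γ t ∈ U) ∧ γ 0 = x ∧ γ 1 = y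

noncomputable def gSpeed (g : E → E → E → ℝ) (γ : ℝ → E) (t : ℝ) : ℝ :=
  √(g (γ t) (deriv γ t) (deriv γ t))

lemma gPathLength_eq_integral_gSpeed (γ : ℝ → E) :
    gPathLength g γ = ∫ t in (0:ℝ)..1, gSpeed g γ t :=
  rfl

lemma gSpeed_nonneg (γ : ℝ → E) (t : ℝ) : 0 ≤ gSpeed g γ t := sqrt_nonneg _

lemma gPathLength_nonneg (γ : ℝ → E) : 0 ≤ gPathLength g γ :=
  integral_nonneg zero_le_one fun t _ => gSpeed_nonneg γ t

lemma continuousOn_gSpeed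
    (hgcont : ContinuousOn (fun p : E × E × E => g p.1 p.2.1 p.2.2) (U ×ˢ univ ×ˢ univ))
    {γ : ℝ → E} (hγ : ContDiff ℝ 1 γ) (hγU : ∀ t ∈ Icc (0:ℝ) 1, γ t ∈ U) :
    ContinuousOn (gSpeed g γ) (Icc 0 1) := by
  have hγ' : Continuous (deriv γ) := hγ.continuous_deriv le_rfl
  refine continuous_sqrt.comp_continuousOn (hgcont.comp
    (hγ.continuous.prodMk (hγ'.prodMk hγ')).continuousOn fun t ht => ?_)
  exact ⟨hγU t ht, trivial, trivial⟩

lemma Filter.EventuallyEq.gSpeed_eq {γ δ : ℝ → E} {t : ℝ} (h : γ =ᶠ[𝓝 t] δ) :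
    gSpeed g γ t = gSpeed g δ t := by
  rw [gSpeed, gSpeed, h.eq_of_nhds, h.deriv_eq]

lemma gSpeed_comp (hscale : ∀ x ∈ U, ∀ (a : ℝ) (v : E), g x (a • v) (a • v) = a ^ 2 * g x v v)
    {γ : ℝ → E} {φ : ℝ → ℝ} {t : ℝ} (hγ : DifferentiableAt ℝ γ (φ t))
    (hφ : DifferentiableAt ℝ φ t) (hU : γ (φ t) ∈ U) :
    gSpeed g (γ ∘ φ) t = |deriv φ t| * gSpeed g γ (φ t) := by
  rw [gSpeed, deriv.scomp t hγ hφ, Function.comp_apply, hscale _ hU, sqrt_mul (sq_nonneg _),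
    sqrt_sq_eq_abs, gSpeed]

lemma integral_gSpeed_comp
    (hscale : ∀ x ∈ U, ∀ (a : ℝ) (v : E), g x (a • v) (a • v) = a ^ 2 * g x v v)
    {γ : ℝ → E} {φ : ℝ → ℝ} {a b : ℝ} (hab : a ≤ b) (hγ : Differentiable ℝ γ)
    (hφ : Differentiable ℝ φ) (hφm : Monotone φ) (hU : ∀ t ∈ Icc a b, γ (φ t) ∈ U) :
    ∫ t in a..b, gSpeed g (γ ∘ φ) t = ∫ u in φ a..φ b, gSpeed g γ u := by
  rw [← integral_deriv_smul_comp_of_deriv_nonneg hφ.continuous.continuousOn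
    (fun t _ => (hφ t).hasDerivAt) (fun t _ => hφm.deriv_nonneg)]
  refine integral_congr fun t ht => ?_
  rw [uIcc_of_le hab] at ht
  rw [gSpeed_comp hscale (hγ _) (hφ t) (hU t ht), abs_of_nonneg hφm.deriv_nonneg, smul_eq_mul,
    Function.comp_apply]

lemma integral_gSpeed_eq_gPathLength
    (hscale : ∀ x ∈ U, ∀ (a : ℝ) (v : E), g x (a • v) (a • v) = a ^ 2 * g x v v)
    {γ c : ℝ → E} {φ : ℝ → ℝ} {a b : ℝ} (hab : a ≤ b) (hγ : Differentiable ℝ γ)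
    (hφ : Differentiable ℝ φ) (hφm : Monotone φ) (hU : ∀ t ∈ Icc a b, γ (φ t) ∈ U)
    (ha : φ a = 0) (hb : φ b = 1) (hc : ∀ t ∈ Icc a b, c =ᶠ[𝓝 t] γ ∘ φ) :
    ∫ t in a..b, gSpeed g c t = gPathLength g γ := by
  rw [integral_congr fun t ht => (hc t (uIcc_of_le hab ▸ ht)).gSpeed_eq,
    integral_gSpeed_comp hscale hab hγ hφ hφm hU, ha, hb, gPathLength_eq_integral_gSpeed]

lemma gDist_le_gPathLength {x y : E} {γ : ℝ → E} (hγ : IsAdmissiblePath U x y γ) :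
    gDist U g x y ≤ ENNReal.ofReal (gPathLength g γ) :=
  iInf₂_le γ hγ

lemma exists_isAdmissiblePath_of_gDist_lt {x y : E} {c : ℝ≥0∞} (h : gDist U g x y < c) :
    ∃ γ, IsAdmissiblePath U x y γ ∧ ENNReal.ofReal (gPathLength g γ) < c := by
  simpa only [gDist, IsAdmissiblePath, iInf_lt_iff, exists_prop] using h

lemma gDist_le_gPathLength_of_mem_Icc
    (hgcont : ContinuousOn (fun p : E × E × E => g p.1 p.2.1 p.2.2) (U ×ˢ univ ×ˢ univ))
    (hscale : ∀ x ∈ U, ∀ (a : ℝ) (v : E), g x (a • v) (a • v) = a ^ 2 * g x v v)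
    {γ : ℝ → E} (hγ : ContDiff ℝ 1 γ) (hγU : ∀ t ∈ Icc (0:ℝ) 1, γ t ∈ U)
    {s : ℝ} (hs : s ∈ Icc (0:ℝ) 1) :
    gDist U g (γ 0) (γ s) ≤ ENNReal.ofReal (gPathLength g γ) := by
  have hφm : Monotone fun t : ℝ => s * t := fun _ _ h => mul_le_mul_of_nonneg_left h hs.1
  have hφU : ∀ t ∈ Icc (0:ℝ) 1, γ (s * t) ∈ U := fun t ht =>
    hγU _ ⟨mul_nonneg hs.1 ht.1, mul_le_one₀ hs.2 ht.1 ht.2⟩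
  have hρ : IsAdmissiblePath U (γ 0) (γ s) (γ ∘ fun t => s * t) :=
    ⟨hγ.comp (contDiff_const.mul contDiff_id), hφU, by simp, by simp⟩
  have hlen : gPathLength g (γ ∘ fun t => s * t) = ∫ u in (0:ℝ)..s, gSpeed g γ u := by
    have := integral_gSpeed_comp hscale zero_le_one (hγ.differentiable one_ne_zero)
      (by fun_prop) hφm hφU
    rwa [mul_zero, mul_one, ← gPathLength_eq_integral_gSpeed] at this
  refine (gDist_le_gPathLength hρ).trans (ENNReal.ofReal_le_ofReal ?_)
  rw [hlen]
  exact integral_mono_interval le_rfl hs.1 hs.2 (ae_of_all _ (gSpeed_nonneg γ))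
    ((continuousOn_gSpeed hgcont hγ hγU).intervalIntegrable_of_Icc zero_le_one)

lemma IsAdmissiblePath.exists_trans
    (hgcont : ContinuousOn (fun p : E × E × E => g p.1 p.2.1 p.2.2) (U ×ˢ univ ×ˢ univ))
    (hscale : ∀ x ∈ U, ∀ (a : ℝ) (v : E), g x (a • v) (a • v) = a ^ 2 * g x v v)
    {x y z : E} {γ₁ γ₂ : ℝ → E} (h₁ : IsAdmissiblePath U x y γ₁)
    (h₂ : IsAdmissiblePath U y z γ₂) :
    ∃ γ, IsAdmissiblePath U x z γ ∧ gPathLength g γ = gPathLength g γ₁ + gPathLength g γ₂ := by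
  obtain ⟨hγ₁, hU₁, rfl, hy₁⟩ := h₁
  obtain ⟨hγ₂, hU₂, hy₂, rfl⟩ := h₂
  set φ₁ : ℝ → ℝ := fun t => smoothTransition (6 * t - 1)
  set φ₂ : ℝ → ℝ := fun t => smoothTransition (6 * t - 4)
  have hφ₁ : ContDiff ℝ 1 φ₁ := smoothTransition.contDiff.comp (by fun_prop)
  have hφ₂ : ContDiff ℝ 1 φ₂ := smoothTransition.contDiff.comp (by fun_prop)
  have hφ₁m : Monotone φ₁ := smoothTransition.monotone.comp fun _ _ h => by linarith
  have hφ₂m : Monotone φ₂ := smoothTransition.monotone.comp fun _ _ h => by linarith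
  have hσI : ∀ s, smoothTransition s ∈ Icc (0:ℝ) 1 := fun s =>
    ⟨smoothTransition.nonneg s, smoothTransition.le_one s⟩
  -- `γ₁ ∘ φ₁` has stopped at `y` before `γ₂ ∘ φ₂` leaves it, so their sum minus `y` is a
  -- C¹ concatenation.
  set c : ℝ → E := fun t => γ₁ (φ₁ t) + (γ₂ (φ₂ t) - y)
  have hc₁ : ∀ t < 2/3, c t = γ₁ (φ₁ t) := fun t ht => by
    simp [c, φ₂, smoothTransition.zero_of_nonpos (by linarith : 6 * t - 4 ≤ 0), hy₂]
  have hc₂ : ∀ t > 1/3, c t = γ₂ (φ₂ t) := fun t ht => by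
    simp [c, φ₁, smoothTransition.one_of_one_le (by linarith : 1 ≤ 6 * t - 1), hy₁]
  have hcU : ∀ t ∈ Icc (0:ℝ) 1, c t ∈ U := fun t _ => by
    rcases lt_or_ge t (2/3) with ht | ht
    · exact hc₁ t ht ▸ hU₁ _ (hσI _)
    · exact hc₂ t (by linarith) ▸ hU₂ _ (hσI _)
  have hc : IsAdmissiblePath U (γ₁ 0) (γ₂ 1) c := by
    refine ⟨(hγ₁.comp hφ₁).add ((hγ₂.comp hφ₂).sub contDiff_const), hcU, ?_, ?_⟩
    · rw [hc₁ 0 (by norm_num), show φ₁ 0 = 0 from smoothTransition.zero_of_nonpos (by norm_num)]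
    · rw [hc₂ 1 (by norm_num), show φ₂ 1 = 1 from smoothTransition.one_of_one_le (by norm_num)]
  refine ⟨c, hc, ?_⟩
  have hint :=
    (continuousOn_gSpeed hgcont hc.1 hcU).intervalIntegrable_of_Icc (μ := volume) zero_le_one
  rw [gPathLength_eq_integral_gSpeed, ← integral_add_adjacent_intervals (b := 1/2)
    (hint.mono_set (uIcc_subset_uIcc left_mem_uIcc (by norm_num [mem_uIcc])))
    (hint.mono_set (uIcc_subset_uIcc (by norm_num [mem_uIcc]) right_mem_uIcc))]
  congr 1
  · refine integral_gSpeed_eq_gPathLength hscale (by norm_num) (hγ₁.differentiable one_ne_zero)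
      (hφ₁.differentiable one_ne_zero) hφ₁m (fun t _ => hU₁ _ (hσI _))
      (smoothTransition.zero_of_nonpos (by norm_num)) (smoothTransition.one_of_one_le (by norm_num))
      fun t ht => eventually_of_mem (Iio_mem_nhds (by linarith [ht.2])) hc₁
  · refine integral_gSpeed_eq_gPathLength hscale (by norm_num) (hγ₂.differentiable one_ne_zero)
      (hφ₂.differentiable one_ne_zero) hφ₂m (fun t _ => hU₂ _ (hσI _))
      (smoothTransition.zero_of_nonpos (by norm_num)) (smoothTransition.one_of_one_le (by norm_num))
      fun t ht => eventually_of_mem (Ioi_mem_nhds (by linarith [ht.1])) hc₂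

lemma gDist_triangle
    (hgcont : ContinuousOn (fun p : E × E × E => g p.1 p.2.1 p.2.2) (U ×ˢ univ ×ˢ univ))
    (hscale : ∀ x ∈ U, ∀ (a : ℝ) (v : E), g x (a • v) (a • v) = a ^ 2 * g x v v)
    (x y z : E) : gDist U g x z ≤ gDist U g x y + gDist U g y z := by
  calc gDist U g x z
      ≤ ⨅ (γ₂ : ℝ → E) (_ : IsAdmissiblePath U y z γ₂) (γ₁ : ℝ → E)
          (_ : IsAdmissiblePath U x y γ₁),
          ENNReal.ofReal (gPathLength g γ₁) + ENNReal.ofReal (gPathLength g γ₂) := by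
        refine le_iInf₂ fun γ₂ h₂ => le_iInf₂ fun γ₁ h₁ => ?_
        obtain ⟨γ, hγ, hlen⟩ := IsAdmissiblePath.exists_trans hgcont hscale h₁ h₂
        rw [← ENNReal.ofReal_add (gPathLength_nonneg γ₁) (gPathLength_nonneg γ₂), ← hlen]
        exact gDist_le_gPathLength hγ
    _ = gDist U g x y + gDist U g y z := by
        simp only [gDist, IsAdmissiblePath, ENNReal.iInf_add, ENNReal.add_iInf]

end PathLength

section Gronwall

variable {F : Type*} [NormedAddCommGroup F] [NormedSpace ℝ F]

/- The comparison theorem needs a strict inequality where `‖φ t - φ a‖` touches the barrier;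
inflating both the constant and the rate by `ε` provides it. -/
lemma norm_sub_le_of_norm_deriv_le_mul_one_add_norm_of_pos {φ φ' : ℝ → F} {k : ℝ → ℝ}
    {a b ε : ℝ} (hab : a ≤ b) (hφ : ∀ t ∈ Icc a b, HasDerivAt φ (φ' t) t)
    (hk : ContinuousOn k (Icc a b)) (hbound : ∀ t ∈ Icc a b, ‖φ' t‖ ≤ k t * (1 + ‖φ t‖))
    (hε : 0 < ε) :
    ‖φ b - φ a‖ ≤ (1 + ‖φ a‖ + ε) * (exp ((∫ s in a..b, k s) + ε * (b - a)) - 1) := by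
  set c := 1 + ‖φ a‖ + ε
  set I : ℝ → ℝ := fun t => (∫ s in a..t, k s) + ε * (t - a)
  have hI : ∀ t ∈ Icc a b, HasDerivWithinAt I (k t + ε) (Icc a b) t := by
    intro t ht
    have : Fact (t ∈ Icc a b) := ⟨ht⟩
    have hint : HasDerivWithinAt (fun u => ∫ s in a..u, k s) (k t) (Icc a b) t :=
      integral_hasDerivWithinAt_right
        ((hk.mono (uIcc_subset_Icc (left_mem_Icc.2 hab) ht)).intervalIntegrable)
        (hk.stronglyMeasurableAtFilter_nhdsWithin measurableSet_Icc t) (hk t ht)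
    exact (hint.add (((hasDerivWithinAt_id t _).sub_const a).const_mul ε)).congr_deriv (by simp)
  set B : ℝ → ℝ := fun t => c * (exp (I t) - 1)
  have hB : ∀ t ∈ Icc a b, HasDerivWithinAt B (c * (exp (I t) * (k t + ε))) (Icc a b) t :=
    fun t ht => (((hI t ht).exp).sub_const 1).const_mul c
  refine image_norm_le_of_norm_deriv_right_lt_deriv_boundary' (f := fun t => φ t - φ a)
    (fun t ht => ((hφ t ht).continuousAt.sub continuousAt_const).continuousWithinAt)
    (fun t ht => ((hφ t (Ico_subset_Icc_self ht)).sub_const (φ a)).hasDerivWithinAt)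
    (by simp [B, I]) (fun t ht => (hB t ht).continuousWithinAt)
    (fun t ht => (hB t (Ico_subset_Icc_self ht)).mono_of_mem_nhdsWithin
      (Icc_mem_nhdsGE_of_mem ⟨ht.1, ht.2⟩)) ?_ ⟨hab, le_rfl⟩
  intro t ht hφB
  have ht' := Ico_subset_Icc_self ht
  have hk0 : 0 ≤ k t := by
    have := (norm_nonneg _).trans (hbound t ht')
    exact nonneg_of_mul_nonneg_left this (by positivity)
  have hφt : ‖φ t‖ ≤ ‖φ a‖ + B t := by
    simpa [← hφB] using norm_le_insert' (φ t) (φ a)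
  have hB0 : 0 ≤ B t := hφB ▸ norm_nonneg _
  have hcexp : c * exp (I t) = c + B t := by simp only [B]; ring
  calc ‖φ' t‖ ≤ k t * (1 + ‖φ t‖) := hbound t ht'
    _ ≤ k t * (1 + ‖φ a‖ + B t) := mul_le_mul_of_nonneg_left (by linarith) hk0
    _ < (c + B t) * (k t + ε) := by
      have : 0 < ε * (c + B t) := by positivity
      simp only [c] at this ⊢; nlinarith [mul_nonneg hk0 hε.le]
    _ = c * (exp (I t) * (k t + ε)) := by rw [← hcexp]; ring

lemma norm_sub_le_of_norm_deriv_le_mul_one_add_norm {φ φ' : ℝ → F} {k : ℝ → ℝ}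
    {a b : ℝ} (hab : a ≤ b) (hφ : ∀ t ∈ Icc a b, HasDerivAt φ (φ' t) t)
    (hk : ContinuousOn k (Icc a b)) (hbound : ∀ t ∈ Icc a b, ‖φ' t‖ ≤ k t * (1 + ‖φ t‖)) :
    ‖φ b - φ a‖ ≤ (1 + ‖φ a‖) * (exp (∫ s in a..b, k s) - 1) := by
  have hlim : Tendsto (fun ε => (1 + ‖φ a‖ + ε) * (exp ((∫ s in a..b, k s) + ε * (b - a)) - 1))
      (𝓝[>] 0) (𝓝 ((1 + ‖φ a‖) * (exp (∫ s in a..b, k s) - 1))) := by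
    have hcont : Continuous fun ε : ℝ =>
        (1 + ‖φ a‖ + ε) * (exp ((∫ s in a..b, k s) + ε * (b - a)) - 1) := by fun_prop
    simpa using (hcont.tendsto 0).mono_left nhdsWithin_le_nhds
  refine ge_of_tendsto hlim ?_
  filter_upwards [self_mem_nhdsWithin] with ε hε using
    norm_sub_le_of_norm_deriv_le_mul_one_add_norm_of_pos hab hφ hk hbound hε

end Gronwall

lemma exp_sub_one_le_mul_exp (x : ℝ) : exp x - 1 ≤ x * exp x := by
  have h := one_sub_le_exp_neg x
  rw [exp_neg] at h
  have := mul_le_mul_of_nonneg_right h (exp_pos x).le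
  rw [inv_mul_cancel₀ (exp_pos x).ne'] at this
  linarith

section

variable {E F : Type*} [NormedAddCommGroup E] [NormedSpace ℝ E] [NormedAddCommGroup F]
  [NormedSpace ℝ F] {U : Set E} {g : E → E → E → ℝ} {f : E → F}

lemma norm_sub_le_of_norm_fderiv_le_along (hU : IsOpen U)
    (hgcont : ContinuousOn (fun p : E × E × E => g p.1 p.2.1 p.2.2) (U ×ˢ univ ×ˢ univ))
    (hf : ContDiffOn ℝ 1 f U) {γ : ℝ → E} (hγ : ContDiff ℝ 1 γ)
    (hγU : ∀ t ∈ Icc (0:ℝ) 1, γ t ∈ U) {C : ℝ}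
    (hD : ∀ t ∈ Icc (0:ℝ) 1, ∀ v : E,
      ‖fderiv ℝ f (γ t) v‖ ≤ C * (1 + ‖f (γ t)‖) * √(g (γ t) v v)) :
    ‖f (γ 1) - f (γ 0)‖ ≤ (1 + ‖f (γ 0)‖) * (exp (C * gPathLength g γ) - 1) := by
  have hderiv : ∀ t ∈ Icc (0:ℝ) 1,
      HasDerivAt (f ∘ γ) (fderiv ℝ f (γ t) (deriv γ t)) t := fun t ht =>
    ((hf.contDiffAt (hU.mem_nhds (hγU t ht))).differentiableAt one_ne_zero).hasFDerivAt
      |>.comp_hasDerivAt t ((hγ.differentiable one_ne_zero) t).hasDerivAt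
  have := norm_sub_le_of_norm_deriv_le_mul_one_add_norm (k := fun t => C * gSpeed g γ t)
    zero_le_one hderiv (continuousOn_const.mul (continuousOn_gSpeed hgcont hγ hγU))
    fun t ht => (hD t ht _).trans_eq (by rw [gSpeed, Function.comp_apply]; ring)
  rwa [intervalIntegral.integral_const_mul, ← gPathLength_eq_integral_gSpeed] at this

lemma norm_le_of_gDist_lt (hU : IsOpen U)
    (hgcont : ContinuousOn (fun p : E × E × E => g p.1 p.2.1 p.2.2) (U ×ˢ univ ×ˢ univ))
    (hscale : ∀ x ∈ U, ∀ (a : ℝ) (v : E), g x (a • v) (a • v) = a ^ 2 * g x v v)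
    (hf : ContDiffOn ℝ 1 f U) {y : E} {r C : ℝ} (hC : 0 ≤ C)
    (hCb : ∀ x ∈ U, gDist U g y x < ENNReal.ofReal r → ∀ v : E,
      ‖fderiv ℝ f x v‖ ≤ C * (1 + ‖f x‖) * √(g x v v))
    {x : E} (hx : gDist U g y x < ENNReal.ofReal r) :
    ‖f x‖ ≤ (1 + ‖f y‖) * exp (C * r) := by
  obtain ⟨γ, ⟨hγ, hγU, rfl, rfl⟩, hlen⟩ := exists_isAdmissiblePath_of_gDist_lt hx
  have hL : gPathLength g γ < r :=
    (ENNReal.ofReal_lt_ofReal_iff_of_nonneg (gPathLength_nonneg γ)).1 hlen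
  have hdiff := norm_sub_le_of_norm_fderiv_le_along hU hgcont hf hγ hγU fun t ht =>
    hCb _ (hγU t ht) ((gDist_le_gPathLength_of_mem_Icc hgcont hscale hγ hγU ht).trans_lt hlen)
  have hexp := exp_le_exp.2 (mul_le_mul_of_nonneg_left hL.le hC)
  calc ‖f (γ 1)‖ ≤ ‖f (γ 0)‖ + ‖f (γ 1) - f (γ 0)‖ := norm_le_insert' _ _
    _ ≤ (1 + ‖f (γ 0)‖) * exp (C * gPathLength g γ) := by linarith
    _ ≤ (1 + ‖f (γ 0)‖) * exp (C * r) := by gcongr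

lemma exists_lipschitz_of_gDist_lt (hU : IsOpen U)
    (hgcont : ContinuousOn (fun p : E × E × E => g p.1 p.2.1 p.2.2) (U ×ˢ univ ×ˢ univ))
    (hscale : ∀ x ∈ U, ∀ (a : ℝ) (v : E), g x (a • v) (a • v) = a ^ 2 * g x v v)
    (hf : ContDiffOn ℝ 1 f U) {y : E} {r C M : ℝ} (hr : 0 < r) (hC : 0 < C) (hM₀ : 0 ≤ M)
    (hM : ∀ x, gDist U g y x < ENNReal.ofReal r → ‖f x‖ ≤ M)
    (hCb : ∀ x ∈ U, gDist U g y x < ENNReal.ofReal (3 * r) → ∀ v : E,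
      ‖fderiv ℝ f x v‖ ≤ C * (1 + ‖f x‖) * √(g x v v)) :
    ∃ K > (0:ℝ), ∀ x₁ x₂, gDist U g y x₁ < ENNReal.ofReal r → gDist U g y x₂ < ENNReal.ofReal r →
      ENNReal.ofReal ‖f x₁ - f x₂‖ ≤ ENNReal.ofReal K * gDist U g x₁ x₂ := by
  set K := (1 + M) * C * exp (C * (2 * r)) + M / r
  have hK : 0 < K := by positivity
  refine ⟨K, hK, fun x₁ x₂ h₁ h₂ => ?_⟩
  suffices ∀ γ, IsAdmissiblePath U x₁ x₂ γ → ‖f x₁ - f x₂‖ ≤ K * gPathLength g γ by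
    simp only [gDist, ENNReal.mul_iInf_of_ne (ENNReal.ofReal_pos.2 hK).ne' ENNReal.ofReal_ne_top]
    exact le_iInf₂ fun γ hγ => by
      rw [← ENNReal.ofReal_mul hK.le]; exact ENNReal.ofReal_le_ofReal (this γ hγ)
  rintro γ ⟨hγ, hγU, rfl, rfl⟩
  set L := gPathLength g γ
  have hL₀ : 0 ≤ L := gPathLength_nonneg γ
  rcases le_or_gt (2 * r) L with hL | hL
  · calc ‖f (γ 0) - f (γ 1)‖ ≤ M + M := (norm_sub_le _ _).trans (add_le_add (hM _ h₁) (hM _ h₂))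
      _ = M / r * (2 * r) := by field_simp; ring
      _ ≤ M / r * L := by gcongr
      _ ≤ K * L := mul_le_mul_of_nonneg_right (le_add_of_nonneg_left (by positivity)) hL₀
  · have hball : ∀ t ∈ Icc (0:ℝ) 1, gDist U g y (γ t) < ENNReal.ofReal (3 * r) := fun t ht =>
      calc gDist U g y (γ t) ≤ gDist U g y (γ 0) + gDist U g (γ 0) (γ t) :=
            gDist_triangle hgcont hscale _ _ _
        _ < ENNReal.ofReal r + ENNReal.ofReal (2 * r) :=
            ENNReal.add_lt_add h₁
              ((gDist_le_gPathLength_of_mem_Icc hgcont hscale hγ hγU ht).trans_lt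
                (ENNReal.ofReal_lt_ofReal_iff'.2 ⟨hL, by positivity⟩))
        _ = ENNReal.ofReal (3 * r) := by rw [← ENNReal.ofReal_add hr.le (by positivity)]; ring_nf
    have hdiff := norm_sub_le_of_norm_fderiv_le_along hU hgcont hf hγ hγU fun t ht =>
      hCb _ (hγU t ht) (hball t ht)
    calc ‖f (γ 0) - f (γ 1)‖ ≤ (1 + ‖f (γ 0)‖) * (exp (C * L) - 1) := by rwa [norm_sub_rev]
      _ ≤ (1 + M) * (C * L * exp (C * (2 * r))) := by
        gcongr
        · linarith [exp_sub_one_le_mul_exp (C * L), one_le_exp (by positivity : 0 ≤ C * L)]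
        · exact hM _ h₁
        · exact (exp_sub_one_le_mul_exp _).trans (by gcongr)
      _ ≤ K * L := by
        rw [show (1 + M) * (C * L * exp (C * (2 * r))) = (1 + M) * C * exp (C * (2 * r)) * L by
          ring]
        exact mul_le_mul_of_nonneg_right (le_add_of_nonneg_right (by positivity)) hL₀

end

theorem stmt15_general {E F : Type*}
    [NormedAddCommGroup E] [NormedSpace ℝ E]
    [NormedAddCommGroup F] [NormedSpace ℝ F]
    (U : Set E) (hU : IsOpen U) (g : E → E → E → ℝ)
    (hgcont : ContinuousOn (fun p : E × E × E => g p.1 p.2.1 p.2.2)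
      (U ×ˢ (Set.univ : Set E) ×ˢ (Set.univ : Set E)))
    (hgsymm : ∀ x ∈ U, ∀ v w : E, g x v w = g x w v)
    (hgsmul : ∀ x ∈ U, ∀ (s : ℝ) (v w : E), g x (s • v) w = s * g x v w)
    (f : E → F) (hf : ContDiffOn ℝ 1 f U)
    (hbound : ∀ y ∈ U, ∀ r > (0:ℝ), ∃ C > (0:ℝ), ∀ x ∈ U,
      gDist U g y x < ENNReal.ofReal r → ∀ v : E,
        ‖fderiv ℝ f x v‖ ≤ C * (1 + ‖f x‖) * Real.sqrt (g x v v)) :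
    (∀ y ∈ U, ∀ r > (0:ℝ), ∃ K > (0:ℝ), ∀ x₁ ∈ U, ∀ x₂ ∈ U,
      gDist U g y x₁ < ENNReal.ofReal r → gDist U g y x₂ < ENNReal.ofReal r →
      ENNReal.ofReal ‖f x₁ - f x₂‖ ≤ ENNReal.ofReal K * gDist U g x₁ x₂) ∧
    ∀ y ∈ U, ∀ r > (0:ℝ), ∃ M : ℝ, ∀ x ∈ U,
      gDist U g y x < ENNReal.ofReal r → ‖f x‖ ≤ M := by
  have hscale : ∀ x ∈ U, ∀ (a : ℝ) (v : E), g x (a • v) (a • v) = a ^ 2 * g x v v :=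
    fun x hx a v => by rw [hgsmul x hx, hgsymm x hx, hgsmul x hx]; ring
  have hbdd : ∀ y ∈ U, ∀ r > (0:ℝ), ∃ M ≥ (0:ℝ), ∀ x,
      gDist U g y x < ENNReal.ofReal r → ‖f x‖ ≤ M := fun y hy r hr => by
    obtain ⟨C, hC, hCb⟩ := hbound y hy r hr
    exact ⟨_, by positivity, fun x => norm_le_of_gDist_lt hU hgcont hscale hf hC.le hCb⟩
  refine ⟨fun y hy r hr => ?_, fun y hy r hr => ?_⟩
  · obtain ⟨M, hM₀, hM⟩ := hbdd y hy r hr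
    obtain ⟨C, hC, hCb⟩ := hbound y hy (3 * r) (by positivity)
    obtain ⟨K, hK, hLip⟩ := exists_lipschitz_of_gDist_lt hU hgcont hscale hf hr hC hM₀ hM hCb
    exact ⟨K, hK, fun x₁ _ x₂ _ => hLip x₁ x₂⟩
  · obtain ⟨M, -, hM⟩ := hbdd y hy r hr
    exact ⟨M, fun x _ => hM x⟩

/-- if the derivative of `f` satisfies the bound
`‖Df(x)v‖ ≤ C (1 + ‖f x‖) |v|_x` uniformly on metric balls, then `f` is
Lipschitz on metric balls with respect to the induced distance, and in
particular bounded on every metric ball. -/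
theorem stmt15 {E F : Type*}
    [NormedAddCommGroup E] [NormedSpace ℝ E] [CompleteSpace E]
    [NormedAddCommGroup F] [NormedSpace ℝ F] [CompleteSpace F]
    (U : Set E) (hU : IsOpen U) (g : E → E → E → ℝ)
    (hgcont : ContinuousOn (fun p : E × E × E => g p.1 p.2.1 p.2.2)
      (U ×ˢ (Set.univ : Set E) ×ˢ (Set.univ : Set E)))
    (hgsymm : ∀ x ∈ U, ∀ v w : E, g x v w = g x w v)
    (hgadd : ∀ x ∈ U, ∀ u v w : E, g x (u + v) w = g x u w + g x v w)
    (hgsmul : ∀ x ∈ U, ∀ (s : ℝ) (v w : E), g x (s • v) w = s * g x v w)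
    (hgpsd : ∀ x ∈ U, ∀ v : E, 0 ≤ g x v v)
    (f : E → F) (hf : ContDiffOn ℝ 1 f U)
    (hbound : ∀ y ∈ U, ∀ r > (0:ℝ), ∃ C > (0:ℝ), ∀ x ∈ U,
      gDist U g y x < ENNReal.ofReal r → ∀ v : E,
        ‖fderiv ℝ f x v‖ ≤ C * (1 + ‖f x‖) * Real.sqrt (g x v v)) :
    (∀ y ∈ U, ∀ r > (0:ℝ), ∃ K > (0:ℝ), ∀ x₁ ∈ U, ∀ x₂ ∈ U,
      gDist U g y x₁ < ENNReal.ofReal r → gDist U g y x₂ < ENNReal.ofReal r →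
      ENNReal.ofReal ‖f x₁ - f x₂‖ ≤ ENNReal.ofReal K * gDist U g x₁ x₂) ∧
    ∀ y ∈ U, ∀ r > (0:ℝ), ∃ M : ℝ, ∀ x ∈ U,
      gDist U g y x < ENNReal.ofReal r → ‖f x‖ ≤ M :=
  stmt15_general U hU g hgcont hgsymm hgsmul f hf hbound
end

section
/- Let E and E₀ be separable real Hilbert spaces and let i : E → E₀ be a continuous injective linear map with dense range. Then there exists a sequence of continuous linear operators Pₙ : E₀ → E such that for every x ∈ E₀ one has ‖i(Pₙ x) − x‖_{E₀} → 0 as n → ∞, and the convergence is uniform on compact subsets of E₀, i.e. for every compact set K ⊆ E₀, sup_{x ∈ K} ‖i(Pₙ x) − x‖_{E₀} → 0. -/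
/-!
Let `v` be a dense sequence in `E` and `Fₙ = span {v₀, …, vₙ₋₁}`. The finite-dimensional
subspaces `i(Fₙ)` increase and their union is dense in `E₀`, since `i ∘ v` has dense range.
Take `Pₙ = (i|_{Fₙ})⁻¹ ∘ πₙ`, where `πₙ` is the orthogonal projection onto `i(Fₙ)`; then
`i ∘ Pₙ = πₙ → id` pointwise. The `πₙ` are all `1`-Lipschitz, hence equicontinuous, and for
an equicontinuous family pointwise convergence is uniform on compact sets.
-/

open Filter Topology

theorem Equicontinuous.tendstoUniformlyOn_of_tendsto {ι X α : Type*} [TopologicalSpace X]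
    [UniformSpace α] {F : ι → X → α} {f : X → α} {l : Filter ι} (hF : Equicontinuous F)
    (h : ∀ x, Tendsto (F · x) l (𝓝 (f x))) {K : Set X} (hK : IsCompact K) :
    TendstoUniformlyOn F f l K := by
  have hcover : ⋃₀ {K : Set X | IsCompact K} = Set.univ :=
    Set.sUnion_eq_univ_iff.2 fun x => ⟨{x}, isCompact_singleton, rfl⟩
  have := (EquicontinuousOn.tendsto_uniformOnFun_iff_pi (fun _ hK => hK) hcover
    (fun K _ => hF.equicontinuousOn K) l f).2 (tendsto_pi_nhds.2 h)
  exact UniformOnFun.tendsto_iff_tendstoUniformlyOn.1 this K hK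

namespace Submodule

section Span

variable {R M : Type*} [Semiring R] [AddCommMonoid M] [Module R M]

theorem monotone_span_image_Iio (u : ℕ → M) : Monotone fun n => span R (u '' Set.Iio n) :=
  fun _ _ hmn => span_mono (Set.image_mono (Set.Iio_subset_Iio hmn))

theorem iSup_span_image_Iio (u : ℕ → M) :
    ⨆ n, span R (u '' Set.Iio n) = span R (Set.range u) := by
  rw [iSup_span]
  congr 1
  ext x
  simp only [Set.mem_iUnion, Set.mem_image, Set.mem_Iio, Set.mem_range]
  exact ⟨fun ⟨_, k, _, hk⟩ => ⟨k, hk⟩, fun ⟨k, hk⟩ => ⟨k + 1, k, k.lt_succ_self, hk⟩⟩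

end Span

variable {𝕜 E : Type*} [RCLike 𝕜] [NormedAddCommGroup E] [InnerProductSpace 𝕜 E]

theorem tendstoUniformlyOn_starProjection {ι : Type*} [Preorder ι] (U : ι → Submodule 𝕜 E)
    [∀ t, (U t).HasOrthogonalProjection] (hU : Monotone U)
    (hU_dense : ⊤ ≤ (⨆ t, U t).topologicalClosure) {K : Set E} (hK : IsCompact K) :
    TendstoUniformlyOn (fun t x => (U t).starProjection x) id atTop K :=
  (LipschitzWith.uniformEquicontinuous _ 1 fun t => (U t).lipschitzWith_starProjection)
    |>.equicontinuous.tendstoUniformlyOn_of_tendsto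
      (fun x => starProjection_tendsto_self U hU x hU_dense) hK

end Submodule

namespace ContinuousLinearMap

variable {𝕜 E E₀ : Type*} [RCLike 𝕜] [NormedAddCommGroup E] [NormedSpace 𝕜 E]
  [NormedAddCommGroup E₀] [InnerProductSpace 𝕜 E₀]
  (i : E →L[𝕜] E₀) (hi : Function.Injective i) (F : Submodule 𝕜 E) [FiniteDimensional 𝕜 F]

noncomputable def liftStarProjection : E₀ →L[𝕜] E :=
  LinearMap.toContinuousLinearMap
      (F.subtype ∘ₗ (F.equivMapOfInjective (i : E →ₗ[𝕜] E₀) hi).symm.toLinearMap)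
    ∘L (F.map (i : E →ₗ[𝕜] E₀)).orthogonalProjectionOnto

theorem apply_liftStarProjection (x : E₀) :
    i (i.liftStarProjection hi F x) = (F.map (i : E →ₗ[𝕜] E₀)).starProjection x :=
  Submodule.map_equivMapOfInjective_symm_apply (i : E →ₗ[𝕜] E₀) hi F _

end ContinuousLinearMap

theorem stmt18_general {E E₀ : Type*}
    [NormedAddCommGroup E] [InnerProductSpace ℝ E]
    [TopologicalSpace.SeparableSpace E]
    [NormedAddCommGroup E₀] [InnerProductSpace ℝ E₀]
    (i : E →L[ℝ] E₀) (hi : Function.Injective i) (hd : DenseRange i) :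
    ∃ P : ℕ → (E₀ →L[ℝ] E),
      (∀ x : E₀, Tendsto (fun n => ‖i (P n x) - x‖) atTop (𝓝 0)) ∧
      ∀ K : Set E₀, IsCompact K → ∀ ε > (0:ℝ), ∃ N : ℕ, ∀ n ≥ N, ∀ x ∈ K,
        ‖i (P n x) - x‖ < ε := by
  set v := TopologicalSpace.denseSeq E
  set F : ℕ → Submodule ℝ E := fun n => Submodule.span ℝ (v '' Set.Iio n)
  have (n : ℕ) : FiniteDimensional ℝ (F n) :=
    FiniteDimensional.span_of_finite ℝ ((Set.finite_Iio n).image v)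
  set G : ℕ → Submodule ℝ E₀ := fun n => (F n).map (i : E →ₗ[ℝ] E₀)
  have hG_mono : Monotone G := fun _ _ hmn =>
    Submodule.map_mono (Submodule.monotone_span_image_Iio v hmn)
  have hG_dense : ⊤ ≤ (⨆ n, G n).topologicalClosure := by
    refine top_le_iff.2 (Submodule.dense_iff_topologicalClosure_eq_top.1 ?_)
    rw [← Submodule.map_iSup, Submodule.iSup_span_image_Iio, Submodule.map_span,
      ← Set.range_comp]
    exact (hd.comp (TopologicalSpace.denseRange_denseSeq E) i.continuous).mono
      Submodule.subset_span
  refine ⟨fun n => i.liftStarProjection hi (F n), fun x => ?_, fun K hK ε hε => ?_⟩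
  · simp only [i.apply_liftStarProjection]
    exact tendsto_iff_norm_sub_tendsto_zero.1
      (Submodule.starProjection_tendsto_self G hG_mono x hG_dense)
  · have := Submodule.tendstoUniformlyOn_starProjection G hG_mono hG_dense hK
    obtain ⟨N, hN⟩ := eventually_atTop.1 (Metric.tendstoUniformlyOn_iff.1 this ε hε)
    refine ⟨N, fun n hn x hx => ?_⟩
    rw [i.apply_liftStarProjection, ← dist_eq_norm, dist_comm]
    exact hN n hn x hx

/-- if a separable Hilbert space `E` is continuously and densely
embedded in a separable Hilbert space `E₀` via `i`, then there is a sequence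
of bounded operators `Pₙ : E₀ → E` with `i (Pₙ x) → x` for every `x ∈ E₀`,
uniformly on compact subsets of `E₀`. -/
theorem stmt18 {E E₀ : Type*}
    [NormedAddCommGroup E] [InnerProductSpace ℝ E] [CompleteSpace E]
    [TopologicalSpace.SeparableSpace E]
    [NormedAddCommGroup E₀] [InnerProductSpace ℝ E₀] [CompleteSpace E₀]
    [TopologicalSpace.SeparableSpace E₀]
    (i : E →L[ℝ] E₀) (hi : Function.Injective i) (hd : DenseRange i) :
    ∃ P : ℕ → (E₀ →L[ℝ] E),
      (∀ x : E₀, Tendsto (fun n => ‖i (P n x) - x‖) atTop (𝓝 0)) ∧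
      ∀ K : Set E₀, IsCompact K → ∀ ε > (0:ℝ), ∃ N : ℕ, ∀ n ≥ N, ∀ x ∈ K,
        ‖i (P n x) - x‖ < ε :=
  stmt18_general i hi hd
end
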